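/- Let fL, fU : ℝⁿ → ℝ be convex with fL ≤ fU pointwise, g_j : ℝⁿ → ℝ convex for j = 1,…,m, X = {x : g_j(x) ≤ 0 ∀j}, 0 ≤ εL ≤ εU, and let x* ∈ X be a weakly E-quasi-LU-solution (no x ∈ X with fL(x) < fL(x*) − εU‖x − x*‖ and fU(x) < fU(x*) − εL‖x − x*‖). Then there exist μL, μU ≥ 0 and λ_j ≥ 0 for j ∈ J(x*) = {j : g_j(x*) = 0}, with μL + μU + Σ_{j∈J(x*)} λ_j = 1, such that 0 ∈ μL·(∂fL(x*) + εU·B) + μU·(∂fU(x*) + εL·B) + Σ_{j∈J(x*)} λ_j·∂g_j(x*), where B is the closed unit ball of ℝⁿ. If moreover there do not exist λ_j ≥ 0, j ∈ J(x*), not all zero, with 0 ∈ Σ_{j∈J(x*)} λ_j ∂g_j(x*) (Mangasarian–Fromovitz condition), then μL + μU > 0. -/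

import Mathlib

/-!
At a weakly E-quasi-LU-solution `x*`, the convex functions
`φL = fL - fL x* + εU ‖· - x*‖`, `φU = fU - fU x* + εL ‖· - x*‖` and `g j` have no common point
where all of them are negative. Separating the open convex set `{r | ∃ x, φᵢ x < rᵢ}` from `0`
gives weights `ν` in the standard simplex with `∑ νᵢ φᵢ ≥ 0`; as every `φᵢ x* ≤ 0`, the point `x*`
minimizes the Lagrangian `∑ νᵢ φᵢ` and complementary slackness holds. The sum and scaling rules
for subdifferentials (the sum rule again by Hahn–Banach, in `E × ℝ`) split
`0 ∈ ∂(∑ νᵢ φᵢ)(x*)` into the stated inclusion, using `∂‖· - x*‖(x*) ⊆ B`. If `μL = μU = 0`, the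
inclusion becomes `0 ∈ ∑ λⱼ ∂gⱼ(x*)` with `∑ λⱼ = 1`, which the Mangasarian–Fromovitz condition
excludes.
-/

open Pointwise

/-- The convex subdifferential of φ at x*. -/
def subdiff {n : ℕ} (φ : EuclideanSpace ℝ (Fin n) → ℝ)
    (xs : EuclideanSpace ℝ (Fin n)) : Set (EuclideanSpace ℝ (Fin n)) :=
  {v | ∀ x, φ x - φ xs ≥ (inner ℝ v (x - xs) : ℝ)}

open Set InnerProductSpace

theorem ConvexOn.finsetSum {𝕜 E β ι : Type*} [Semiring 𝕜] [PartialOrder 𝕜] [AddCommMonoid E]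
    [AddCommMonoid β] [PartialOrder β] [IsOrderedAddMonoid β] [SMul 𝕜 E] [Module 𝕜 β]
    {s : Set E} (hs : Convex 𝕜 s) {f : ι → E → β} {t : Finset ι}
    (hf : ∀ i ∈ t, ConvexOn 𝕜 s (f i)) : ConvexOn 𝕜 s (∑ i ∈ t, f i) :=
  Finset.sum_induction f (ConvexOn 𝕜 s) (fun _ _ => ConvexOn.add) (convexOn_const 0 hs) hf

section Alternative

variable {ι : Type*} [Fintype ι]

theorem exists_mem_stdSimplex_forall_pos_of_isUpperSet {C : Set (ι → ℝ)} (hCo : IsOpen C)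
    (hCc : Convex ℝ C) (hCu : IsUpperSet C) (hC0 : 0 ∉ C) (hCne : C.Nonempty) :
    ∃ μ ∈ stdSimplex ℝ ι, ∀ r ∈ C, 0 < ∑ i, μ i * r i := by
  classical
  obtain ⟨L, hL⟩ := geometric_hahn_banach_open_point hCc hCo hC0
  rw [map_zero] at hL
  obtain ⟨r₀, hr₀⟩ := hCne
  set c : ι → ℝ := fun i => -L (Pi.single i 1)
  have hLc : ∀ r, L r = -∑ i, c i * r i := fun r => by
    conv_lhs => rw [← Finset.univ_sum_single r]
    simp only [c, neg_mul, Finset.sum_neg_distrib, neg_neg, map_sum]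
    refine Finset.sum_congr rfl fun i _ => ?_
    rw [mul_comm, ← smul_eq_mul, ← map_smul, ← Pi.single_smul', smul_eq_mul, mul_one]
  -- moving from `r₀` along a coordinate ray stays in `C`, so `L` cannot grow along it
  have hc : ∀ i, 0 ≤ c i := fun i => by
    by_contra! hi
    have hr : r₀ + Pi.single i (L r₀ / c i) ∈ C := hCu (le_add_of_nonneg_right
      (Pi.single_nonneg.2 (div_nonneg_of_nonpos (hL r₀ hr₀).le hi.le))) hr₀
    have := hL _ hr
    rw [map_add, hLc (Pi.single i _)] at this
    simp [Pi.single_apply, mul_div_cancel₀ _ hi.ne] at this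
  have hS : 0 < ∑ i, c i := by
    refine (Finset.sum_nonneg fun i _ => hc i).lt_of_ne fun h => ?_
    have hc0 := (Finset.sum_eq_zero_iff_of_nonneg fun i _ => hc i).1 h.symm
    have := hL r₀ hr₀
    simp [hLc, hc0] at this
  refine ⟨(∑ i, c i)⁻¹ • c, ⟨fun i => smul_nonneg (inv_nonneg.2 hS.le) (hc i), ?_⟩, ?_⟩
  · simp [← Finset.mul_sum, hS.ne']
  · intro r hr
    have := hL r hr
    simp only [Pi.smul_apply, smul_eq_mul, mul_assoc, ← Finset.mul_sum]
    rw [hLc] at this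
    exact mul_pos (inv_pos.2 hS) (by linarith)

theorem exists_mem_stdSimplex_forall_sum_mul_nonneg {X : Type*} [AddCommGroup X] [Module ℝ X]
    [Nonempty X] {a : ι → X → ℝ} (ha : ∀ i, ConvexOn ℝ univ (a i)) (h : ∀ x, ∃ i, 0 ≤ a i x) :
    ∃ μ ∈ stdSimplex ℝ ι, ∀ x, 0 ≤ ∑ i, μ i * a i x := by
  set C : Set (ι → ℝ) := {r | ∃ x, ∀ i, a i x < r i}
  have hCo : IsOpen C := by
    have : C = ⋃ x, univ.pi fun i => Ioi (a i x) := by ext; simp [C]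
    rw [this]
    exact isOpen_iUnion fun x => isOpen_set_pi finite_univ fun i _ => isOpen_Ioi
  have hCc : Convex ℝ C := by
    rintro r ⟨x, hx⟩ r' ⟨x', hx'⟩ s t hs ht hst
    refine ⟨s • x + t • x', fun i => ?_⟩
    simpa using ((ha i).convex_strict_epigraph (show (x, r i) ∈ _ from ⟨mem_univ x, hx i⟩)
      (show (x', r' i) ∈ _ from ⟨mem_univ x', hx' i⟩) hs ht hst).2
  have hCu : IsUpperSet C := fun r r' hrr' ⟨x, hx⟩ => ⟨x, fun i => (hx i).trans_le (hrr' i)⟩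
  have hC0 : 0 ∉ C := fun ⟨x, hx⟩ => by
    obtain ⟨i, hi⟩ := h x
    exact (hx i).not_ge hi
  obtain ⟨x₀⟩ := ‹Nonempty X›
  obtain ⟨μ, hμ, hμC⟩ := exists_mem_stdSimplex_forall_pos_of_isUpperSet hCo hCc hCu hC0
    ⟨fun i => a i x₀ + 1, x₀, fun i => lt_add_one _⟩
  refine ⟨μ, hμ, fun x => le_of_forall_pos_lt_add fun δ hδ => ?_⟩
  simpa [mul_add, Finset.sum_add_distrib, ← Finset.sum_mul, hμ.2] using
    hμC (fun i => a i x + δ) ⟨x, fun i => lt_add_of_pos_right _ hδ⟩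

end Alternative

section Subdifferential

variable {n : ℕ} {f g : EuclideanSpace ℝ (Fin n) → ℝ} {xs : EuclideanSpace ℝ (Fin n)}

theorem zero_mem_subdiff_iff : 0 ∈ subdiff f xs ↔ ∀ x, f xs ≤ f x := by
  simp [subdiff]

theorem subdiff_const (c : ℝ) : subdiff (fun _ => c) xs = {0} := by
  refine Subset.antisymm (fun v hv => ?_) (by simp [zero_mem_subdiff_iff])
  have := hv (xs + v)
  simp only [sub_self, add_sub_cancel_left, ge_iff_le] at this
  exact real_inner_self_nonpos.1 this

theorem subdiff_sub_const (c : ℝ) : subdiff (f - fun _ => c) xs = subdiff f xs := by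
  ext v; simp [subdiff]

theorem smul_toDual_symm_mem_subdiff {ℓ : StrongDual ℝ (EuclideanSpace ℝ (Fin n))} {c : ℝ}
    (hc : 0 < c) (h : ∀ x, ℓ x - ℓ xs ≤ c * (f x - f xs)) :
    c⁻¹ • (toDual ℝ _).symm ℓ ∈ subdiff f xs := by
  intro x
  rw [real_inner_smul_left, toDual_symm_apply, map_sub, ge_iff_le, inv_mul_le_iff₀ hc]
  exact h x

theorem zero_mem_subdiff_add_of_forall_le (hf : ConvexOn ℝ univ f) (hg : ConvexOn ℝ univ g)
    (hmin : ∀ x, f xs + g xs ≤ f x + g x) : 0 ∈ subdiff f xs + subdiff g xs := by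
  have hfc : Continuous f := continuousOn_univ.mp (hf.continuousOn isOpen_univ)
  have hAo : IsOpen {p : EuclideanSpace ℝ (Fin n) × ℝ | p.1 ∈ univ ∧ f p.1 < p.2} := by
    simpa using isOpen_lt (hfc.comp continuous_fst) continuous_snd
  have hconc : ConcaveOn ℝ univ ((fun _ => f xs + g xs) - g) :=
    (concaveOn_const _ convex_univ).sub hg
  obtain ⟨L, u, hLA, hLB⟩ := geometric_hahn_banach_open hf.convex_strict_epigraph hAo
    hconc.convex_hypograph (disjoint_left.2 fun p hpA hpB => by
      simp only [mem_ofPred_eq, Pi.sub_apply] at hpA hpB; linarith [hmin p.1])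
  -- `L (y, t) = ℓ y + t β` with `β < 0`; then `ℓ / (-β)` is a subgradient of `f` and
  -- `-ℓ / (-β)` one of `g`
  set ℓ := L.comp (.inl ℝ _ ℝ)
  set β := L (0, 1)
  have hL : ∀ y t, L (y, t) = ℓ y + t * β := fun y t => by
    rw [← smul_eq_mul, ← L.map_smul, ContinuousLinearMap.comp_apply, ← L.map_add]; simp
  have hu : u ≤ ℓ xs + f xs * β := by simpa [hL] using hLB (xs, f xs) (by simp)
  have hβ : β < 0 := by
    have := hLA (xs, f xs + 1) (by simp)
    rw [hL] at this; linarith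
  have hA : ∀ y, ℓ y + f y * β ≤ u := fun y => le_of_forall_pos_lt_add fun ε hε => by
    have := hLA (y, f y + ε / -β) ⟨trivial, by simpa using div_pos hε (neg_pos.2 hβ)⟩
    rw [hL, add_mul, div_mul_eq_mul_div, div_neg, mul_div_assoc, div_self hβ.ne, mul_one] at this
    linarith
  have hB : ∀ y, u ≤ ℓ y + (f xs + g xs - g y) * β := fun y => by
    simpa [hL] using hLB (y, f xs + g xs - g y) (by simp)
  refine mem_add.2 ⟨_, smul_toDual_symm_mem_subdiff (ℓ := ℓ) (neg_pos.2 hβ) fun x => ?_,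
    _, smul_toDual_symm_mem_subdiff (ℓ := -ℓ) (neg_pos.2 hβ) fun x => ?_, ?_⟩
  · linarith [hA x, hA xs, hu]
  · simp only [neg_apply]; linarith [hB x, hA xs]
  · simp [map_neg]

theorem subdiff_add_subset (hf : ConvexOn ℝ univ f) (hg : ConvexOn ℝ univ g) :
    subdiff (f + g) xs ⊆ subdiff f xs + subdiff g xs := by
  intro w hw
  have hf' : ConvexOn ℝ univ (f - fun x => inner ℝ w x) :=
    hf.sub ((innerₛₗ ℝ w).concaveOn convex_univ)
  obtain ⟨v, hv, u, hu, hvu : v + u = 0⟩ := zero_mem_subdiff_add_of_forall_le hf' hg fun x => by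
    have := hw x
    simp only [Pi.add_apply, Pi.sub_apply, inner_sub_right] at this ⊢
    linarith
  refine ⟨v + w, fun x => ?_, u, hu, show v + w + u = w by rw [add_right_comm, hvu, zero_add]⟩
  have := hv x
  simp only [Pi.sub_apply, inner_add_left, inner_sub_right] at this ⊢
  linarith

theorem subdiff_nonempty (hf : ConvexOn ℝ univ f) (xs : EuclideanSpace ℝ (Fin n)) :
    (subdiff f xs).Nonempty := by
  have hg : ConvexOn ℝ univ (fun x => f (xs + xs - x)) := by
    exact hf.comp_affineMap (AffineMap.const ℝ _ (xs + xs) - AffineMap.id ℝ _)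
  -- `xs` is the midpoint of `x` and `xs + xs - x`, so it minimizes `f + f (xs + xs - ·)`
  refine Nonempty.of_add_left ⟨0, zero_mem_subdiff_add_of_forall_le hf hg fun x => ?_⟩
  have := hf.2 (mem_univ x) (mem_univ (xs + xs - x)) (by norm_num : (0 : ℝ) ≤ 1 / 2)
    (by norm_num : (0 : ℝ) ≤ 1 / 2) (add_halves 1)
  rw [show (1 / 2 : ℝ) • x + (1 / 2 : ℝ) • (xs + xs - x) = xs by module] at this
  simp only [smul_eq_mul, add_sub_cancel_right] at this ⊢
  linarith

theorem subdiff_smul_subset (hf : ConvexOn ℝ univ f) {c : ℝ} (hc : 0 ≤ c) :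
    subdiff (c • f) xs ⊆ c • subdiff f xs := by
  rcases hc.eq_or_lt with rfl | hc
  · rw [zero_smul, zero_smul_set (subdiff_nonempty hf xs)]
    exact (subdiff_const 0).subset
  · intro v hv
    rw [mem_smul_set_iff_inv_smul_mem₀ hc.ne']
    intro x
    have := hv x
    rw [real_inner_smul_left, ge_iff_le, inv_mul_le_iff₀ hc]
    simpa [mul_sub] using this

theorem subdiff_norm_sub_subset : subdiff (fun x => ‖x - xs‖) xs ⊆ Metric.closedBall 0 1 := by
  intro v hv
  have := hv (xs + v)
  dsimp only at this
  rw [add_sub_cancel_left, sub_self, norm_zero, sub_zero, real_inner_self_eq_norm_sq,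
    ge_iff_le] at this
  rw [mem_closedBall_zero_iff]
  nlinarith [norm_nonneg v]

theorem convexOn_norm_sub (xs : EuclideanSpace ℝ (Fin n)) :
    ConvexOn ℝ univ fun x => ‖x - xs‖ := by
  simpa [dist_eq_norm] using convexOn_univ_dist xs

theorem subdiff_add_smul_norm_sub_subset (hf : ConvexOn ℝ univ f) {ε : ℝ} (hε : 0 ≤ ε) :
    subdiff (f + ε • fun x => ‖x - xs‖) xs ⊆ subdiff f xs + ε • Metric.closedBall 0 1 :=
  (subdiff_add_subset hf ((convexOn_norm_sub xs).smul hε)).trans <| add_subset_add_left <|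
    (subdiff_smul_subset (convexOn_norm_sub xs) hε).trans (smul_set_mono subdiff_norm_sub_subset)

theorem subdiff_finsetSum_subset {ι : Type*} {s : Finset ι}
    {φ : ι → EuclideanSpace ℝ (Fin n) → ℝ} (hφ : ∀ i ∈ s, ConvexOn ℝ univ (φ i)) :
    subdiff (∑ i ∈ s, φ i) xs ⊆ ∑ i ∈ s, subdiff (φ i) xs := by
  classical
  induction s using Finset.induction_on with
  | empty => exact (subdiff_const 0).subset
  | insert i s hi ih =>
    have hs : ∀ j ∈ s, ConvexOn ℝ univ (φ j) := fun j hj => hφ j (Finset.mem_insert_of_mem hj)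
    rw [Finset.sum_insert hi, Finset.sum_insert hi]
    exact (subdiff_add_subset (hφ i (s.mem_insert_self i)) (.finsetSum convex_univ hs)).trans
      (add_subset_add_left (ih hs))

/-- The Fritz John conditions for convex functions. -/
theorem exists_mem_stdSimplex_zero_mem_sum_smul_subdiff {ι : Type*} [Fintype ι]
    {a : ι → EuclideanSpace ℝ (Fin n) → ℝ} (ha : ∀ i, ConvexOn ℝ univ (a i))
    (h : ∀ x, ∃ i, 0 ≤ a i x) (hxs : ∀ i, a i xs ≤ 0) :
    ∃ μ ∈ stdSimplex ℝ ι, (∀ i, μ i * a i xs = 0) ∧ 0 ∈ ∑ i, μ i • subdiff (a i) xs := by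
  obtain ⟨μ, hμ, hμa⟩ := exists_mem_stdSimplex_forall_sum_mul_nonneg ha h
  have hterm : ∀ i ∈ Finset.univ, μ i * a i xs ≤ 0 :=
    fun i _ => mul_nonpos_of_nonneg_of_nonpos (hμ.1 i) (hxs i)
  have hslack : ∑ i, μ i * a i xs = 0 := (Finset.sum_nonpos hterm).antisymm (hμa xs)
  refine ⟨μ, hμ, fun i => (Finset.sum_eq_zero_iff_of_nonpos hterm).1 hslack i (Finset.mem_univ i),
    ?_⟩
  have hmin : 0 ∈ subdiff (∑ i, μ i • a i) xs :=
    zero_mem_subdiff_iff.2 fun x => by simpa [hslack] using hμa x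
  exact ((subdiff_finsetSum_subset fun i _ => (ha i).smul (hμ.1 i)).trans
    (finsetSum_subset_finsetSum _ _ _ fun i _ => subdiff_smul_subset (ha i) (hμ.1 i))) hmin

end Subdifferential

theorem KKT_necessary_weakly_E_quasi_LU_general (n m : ℕ)
    (fL fU : EuclideanSpace ℝ (Fin n) → ℝ)
    (hfL : ConvexOn ℝ Set.univ fL) (hfU : ConvexOn ℝ Set.univ fU)
    (g : Fin m → EuclideanSpace ℝ (Fin n) → ℝ)
    (hg : ∀ j, ConvexOn ℝ Set.univ (g j))
    (εL εU : ℝ) (hεL : 0 ≤ εL) (hε : εL ≤ εU)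
    (xs : EuclideanSpace ℝ (Fin n)) (hxs : ∀ j, g j xs ≤ 0)
    (hsol : ¬ ∃ x, (∀ j, g j x ≤ 0) ∧
      fL x < fL xs - εU * ‖x - xs‖ ∧ fU x < fU xs - εL * ‖x - xs‖) :
    ∃ μL μU : ℝ, ∃ lam : Fin m → ℝ,
      0 ≤ μL ∧ 0 ≤ μU ∧ (∀ j, 0 ≤ lam j) ∧ (∀ j, g j xs ≠ 0 → lam j = 0) ∧
      μL + μU + ∑ j, lam j = 1 ∧
      (0 : EuclideanSpace ℝ (Fin n)) ∈
        μL • (subdiff fL xs + εU • Metric.closedBall (0 : EuclideanSpace ℝ (Fin n)) 1) +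
        μU • (subdiff fU xs + εL • Metric.closedBall (0 : EuclideanSpace ℝ (Fin n)) 1) +
        ∑ j, lam j • subdiff (g j) xs ∧
      ((¬ ∃ lam' : Fin m → ℝ, (∀ j, 0 ≤ lam' j) ∧ (∀ j, g j xs ≠ 0 → lam' j = 0) ∧
          (∃ j, lam' j ≠ 0) ∧
          (0 : EuclideanSpace ℝ (Fin n)) ∈ ∑ j, lam' j • subdiff (g j) xs) →
        0 < μL + μU) := by
  have hεU : 0 ≤ εU := hεL.trans hε
  set N : EuclideanSpace ℝ (Fin n) → ℝ := fun x => ‖x - xs‖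
  set a := Sum.elim ![fL + εU • N - fun _ => fL xs, fU + εL • N - fun _ => fU xs] g
  have ha : ∀ i, ConvexOn ℝ univ (a i)
    | .inl 0 => (hfL.add ((convexOn_norm_sub xs).smul hεU)).sub (concaveOn_const _ convex_univ)
    | .inl 1 => (hfU.add ((convexOn_norm_sub xs).smul hεL)).sub (concaveOn_const _ convex_univ)
    | .inr j => hg j
  have hnone : ∀ x, ∃ i, 0 ≤ a i x := fun x => by
    by_contra! hx
    refine hsol ⟨x, fun j => (hx (.inr j)).le, ?_, ?_⟩
    · have := hx (.inl 0); simp [a, N] at this; linarith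
    · have := hx (.inl 1); simp [a, N] at this; linarith
  obtain ⟨ν, ⟨hν0, hν1⟩, hslack, hmem⟩ :=
    exists_mem_stdSimplex_zero_mem_sum_smul_subdiff (xs := xs) ha hnone (by
      rintro (i | j) <;> [fin_cases i <;> simp [a, N]; exact hxs j])
  rw [Fintype.sum_sum_type, Fin.sum_univ_two] at hν1 hmem
  have hlam : ∀ j, g j xs ≠ 0 → ν (.inr j) = 0 := fun j hj =>
    (mul_eq_zero.1 (hslack (.inr j))).resolve_right hj
  refine ⟨ν (.inl 0), ν (.inl 1), fun j => ν (.inr j), hν0 _, hν0 _, fun j => hν0 _, hlam, hν1,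
    add_subset_add (add_subset_add (smul_set_mono ?_) (smul_set_mono ?_)) subset_rfl hmem, ?_⟩
  · exact (subdiff_sub_const _).trans_subset (subdiff_add_smul_norm_sub_subset hfL hεU)
  · exact (subdiff_sub_const _).trans_subset (subdiff_add_smul_norm_sub_subset hfU hεL)
  · intro hMF
    by_contra! hμ
    have h0 : ν (.inl 0) = 0 := by linarith [hν0 (.inl 0), hν0 (.inl 1)]
    have h1 : ν (.inl 1) = 0 := by linarith [hν0 (.inl 0), hν0 (.inl 1)]
    rw [h0, h1, zero_add, zero_add] at hν1
    rw [h0, h1] at hmem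
    refine hMF ⟨fun j => ν (.inr j), fun j => hν0 _, hlam, ?_, ?_⟩
    · obtain ⟨j, -, hj⟩ := Finset.exists_ne_zero_of_sum_ne_zero (hν1 ▸ one_ne_zero)
      exact ⟨j, hj⟩
    · simpa [a] using add_subset_add (add_subset_add (zero_smul_set_subset _)
        (zero_smul_set_subset _)) subset_rfl hmem

theorem KKT_necessary_weakly_E_quasi_LU (n m : ℕ)
    (fL fU : EuclideanSpace ℝ (Fin n) → ℝ)
    (hfL : ConvexOn ℝ Set.univ fL) (hfU : ConvexOn ℝ Set.univ fU)
    (hf : ∀ x, fL x ≤ fU x)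
    (g : Fin m → EuclideanSpace ℝ (Fin n) → ℝ)
    (hg : ∀ j, ConvexOn ℝ Set.univ (g j))
    (εL εU : ℝ) (hεL : 0 ≤ εL) (hε : εL ≤ εU)
    (xs : EuclideanSpace ℝ (Fin n)) (hxs : ∀ j, g j xs ≤ 0)
    (hsol : ¬ ∃ x, (∀ j, g j x ≤ 0) ∧
      fL x < fL xs - εU * ‖x - xs‖ ∧ fU x < fU xs - εL * ‖x - xs‖) :
    ∃ μL μU : ℝ, ∃ lam : Fin m → ℝ,
      0 ≤ μL ∧ 0 ≤ μU ∧ (∀ j, 0 ≤ lam j) ∧ (∀ j, g j xs ≠ 0 → lam j = 0) ∧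
      μL + μU + ∑ j, lam j = 1 ∧
      (0 : EuclideanSpace ℝ (Fin n)) ∈
        μL • (subdiff fL xs + εU • Metric.closedBall (0 : EuclideanSpace ℝ (Fin n)) 1) +
        μU • (subdiff fU xs + εL • Metric.closedBall (0 : EuclideanSpace ℝ (Fin n)) 1) +
        ∑ j, lam j • subdiff (g j) xs ∧
      ((¬ ∃ lam' : Fin m → ℝ, (∀ j, 0 ≤ lam' j) ∧ (∀ j, g j xs ≠ 0 → lam' j = 0) ∧
          (∃ j, lam' j ≠ 0) ∧
          (0 : EuclideanSpace ℝ (Fin n)) ∈ ∑ j, lam' j • subdiff (g j) xs) →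
        0 < μL + μU) :=
  KKT_necessary_weakly_E_quasi_LU_general n m fL fU hfL hfU g hg εL εU hεL hε xs hxs hsol
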